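/- Let G be a finite connected bipartite graph, and let d be a positive real root that is singular (i.e. some c_t(d) has a negative coordinate, where c_t are the alternating partial Coxeter transformations). Then there exists t ∈ ℤ and a vertex g with d = c_t(ē_g), where ē_g is the simple root at g. -/

import Mathlib

open Finset

/-- The partial Coxeter transformation: simultaneous reflection in all vertices
belonging to the part `P` of a bipartition. -/
def partCox {V : Type} [Fintype V] [DecidableEq V] (G : SimpleGraph V)
    [DecidableRel G.Adj] (P : V → Prop) [DecidablePred P] (x : V → ℝ) : V → ℝ :=
  fun v => if P v then -x v + ∑ h ∈ G.neighborFinset v, x h else x v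

/-- c_k for k > 0: alternating word of length k, rightmost factor c̄ (odd part). -/
def coxPos {V : Type} [Fintype V] [DecidableEq V] (G : SimpleGraph V)
    [DecidableRel G.Adj] (odd : V → Prop) [DecidablePred odd] :
    ℕ → (V → ℝ) → (V → ℝ)
  | 0 => id
  | k + 1 =>
      (if Even k then partCox G odd else partCox G (fun v => ¬ odd v)) ∘
        coxPos G odd k

/-- c_{−k} for k > 0: alternating word of length k, rightmost factor c̊ (even part). -/
def coxNeg {V : Type} [Fintype V] [DecidableEq V] (G : SimpleGraph V)
    [DecidableRel G.Adj] (odd : V → Prop) [DecidablePred odd] :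
    ℕ → (V → ℝ) → (V → ℝ)
  | 0 => id
  | k + 1 =>
      (if Even k then partCox G (fun v => ¬ odd v) else partCox G odd) ∘
        coxNeg G odd k

/-- c_t for t ∈ ℤ. -/
def coxZ {V : Type} [Fintype V] [DecidableEq V] (G : SimpleGraph V)
    [DecidableRel G.Adj] (odd : V → Prop) [DecidablePred odd] :
    ℤ → (V → ℝ) → (V → ℝ)
  | Int.ofNat k => coxPos G odd k
  | Int.negSucc k => coxNeg G odd (k + 1)

/-- The simple reflection σ_g. -/
def reflV {V : Type} [Fintype V] [DecidableEq V] (G : SimpleGraph V)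
    [DecidableRel G.Adj] (g : V) (x : V → ℝ) : V → ℝ :=
  fun v => if v = g then -x g + ∑ h ∈ G.neighborFinset g, x h else x v

/-!
Realise the Weyl group as the Coxeter group with `m(i, j) = 3` on edges and `2` on non-edges,
acting on `V → ℝ` by the reflections `x ↦ x - (C x)_g e_g`, where `C = 2 - A` is the Cartan
matrix. Tits' argument (induction on length, using only the relations with `m ∈ {2, 3}`) shows
`w e_i ≥ 0` whenever `ℓ(w s_i) > ℓ(w)`, so every real root is nonnegative or nonpositive.

Let `k` be least with `c_k(d)` not nonnegative. Then `y = c_{k-1}(d)` is a nonnegative real root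
and the next partial Coxeter transformation makes some coordinate `v` negative; that coordinate is
`(σ_v y)_v`, so the root `σ_v y` is nonpositive. It agrees with `y` away from `v`, hence `y` is
supported on `v`, and `yᵀ C y = 2` forces `y = e_v`. The partial transformations are involutions,
so `d = c_{k-1}⁻¹(e_v)`, and this inverse is again a `c_t`. Swapping the two parts of the
bipartition turns `c_t` into `c_{-t}`, which reduces negative `t` to positive ones.
-/

namespace Module

variable {R M : Type*} [CommRing R] [AddCommGroup M] [Module R M] {x y : M} {f g : Dual R M}

theorem reflection_mul_reflection_sq_of_eq_zero (hf : f x = 2) (hg : g y = 2)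
    (hfy : f y = 0) (hgx : g x = 0) : (reflection hf * reflection hg) ^ 2 = 1 := by
  ext z
  simp [sq, reflection_apply, hf, hg, hfy, hgx]
  module

theorem reflection_mul_reflection_pow_three_of_eq_neg_one (hf : f x = 2) (hg : g y = 2)
    (hfy : f y = -1) (hgx : g x = -1) : (reflection hf * reflection hg) ^ 3 = 1 := by
  ext z
  simp [pow_succ, reflection_apply, hf, hg, hfy, hgx]
  module

end Module

namespace CoxeterSystem

variable {B W : Type*} [Group W] {M : CoxeterMatrix B} (cs : CoxeterSystem M W)

theorem length_mul_simple_le (w : W) (i : B) : cs.length (w * cs.simple i) ≤ cs.length w + 1 := by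
  rcases cs.length_mul_simple w i with h | h <;> omega

theorem mul_simple_mul_simple_mul_simple_of_eq_two {i j : B} (h : M i j = 2) (w : W) :
    w * cs.simple i * cs.simple j * cs.simple i = w * cs.simple j := by
  have hcomm : cs.simple i * cs.simple j = cs.simple j * cs.simple i := by
    simpa [braidWord, h, M.symmetric j i, alternatingWord, wordProd_cons] using
      cs.wordProd_braidWord_eq i j
  rw [mul_assoc w, hcomm]
  simp [mul_assoc]

theorem mul_simple_mul_simple_mul_simple_mul_simple_of_eq_three {i j : B} (h : M i j = 3)
    (w : W) : w * cs.simple i * cs.simple j * cs.simple i * cs.simple j =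
      w * cs.simple j * cs.simple i := by
  have hbraid : cs.simple i * cs.simple j * cs.simple i =
      cs.simple j * cs.simple i * cs.simple j := by
    simpa [braidWord, h, M.symmetric j i, alternatingWord, wordProd_cons, mul_assoc] using
      cs.wordProd_braidWord_eq j i
  rw [mul_assoc w, mul_assoc w, hbraid]
  simp [mul_assoc]

end CoxeterSystem

namespace SimplyLaced

open Matrix Function

lemma isIndepSet_of_bipartition {V : Type} {G : SimpleGraph V} {odd : V → Prop}
    (hbip : ∀ u v : V, G.Adj u v → (odd u ↔ ¬ odd v)) : G.IsIndepSet {v | odd v} :=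
  fun u hu w hw _ huw => (hbip u w huw).1 hu hw

variable {V : Type} [DecidableEq V] (G : SimpleGraph V) [DecidableRel G.Adj]

def cartan : Matrix V V ℝ := 2 - G.adjMatrix ℝ

lemma cartan_apply (g h : V) :
    cartan G g h = if g = h then 2 else if G.Adj g h then -1 else 0 := by
  rcases eq_or_ne g h with rfl | hne
  · simp [cartan, Matrix.ofNat_apply]
  · by_cases hadj : G.Adj g h <;> simp [cartan, hne, hadj, Matrix.ofNat_apply]

def coxeterMatrix : CoxeterMatrix V where
  M := Matrix.of fun i j => if i = j then 1 else if G.Adj i j then 3 else 2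
  isSymm := by ext i j; simp [eq_comm, G.adj_comm]
  diagonal i := by simp
  off_diagonal i j h := by simp only [Matrix.of_apply, if_neg h]; split <;> omega

lemma coxeterMatrix_apply (i j : V) :
    coxeterMatrix G i j = if i = j then 1 else if G.Adj i j then 3 else 2 := rfl

variable [Fintype V]

lemma reflV_apply_of_ne (x : V → ℝ) {g v : V} (h : v ≠ g) : reflV G g x v = x v := if_neg h

def coroot (g : V) : Module.Dual ℝ (V → ℝ) := LinearMap.proj g ∘ₗ (cartan G).mulVecLin

lemma coroot_apply (g : V) (x : V → ℝ) :
    coroot G g x = 2 * x g - ∑ h ∈ G.neighborFinset g, x h := by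
  simp [coroot, cartan, SimpleGraph.adjMatrix_mulVec_apply]

lemma coroot_single (g h : V) : coroot G g (Pi.single h 1) = cartan G g h := by
  simp [coroot]

lemma coroot_single_self (g : V) : coroot G g (Pi.single g 1) = 2 := by
  simp [coroot_single, cartan_apply]

def reflection (g : V) : (V → ℝ) ≃ₗ[ℝ] (V → ℝ) := Module.reflection (coroot_single_self G g)

lemma reflection_apply (g : V) (x : V → ℝ) :
    reflection G g x = x - coroot G g x • Pi.single g 1 :=
  Module.reflection_apply _ _

lemma coe_reflection (g : V) : ⇑(reflection G g) = reflV G g := by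
  ext x v
  rcases eq_or_ne v g with rfl | hne
  · simp [reflection_apply, reflV, coroot_apply]; ring
  · simp [reflection_apply, reflV, hne]

lemma dotProduct_cartan_mulVec_reflection (g : V) (x : V → ℝ) :
    reflection G g x ⬝ᵥ cartan G *ᵥ reflection G g x = x ⬝ᵥ cartan G *ᵥ x := by
  have hsymm : (cartan G).IsSymm := by simp [cartan, Matrix.IsSymm, Matrix.transpose_sub]
  have hleft (y : V → ℝ) : Pi.single g 1 ⬝ᵥ cartan G *ᵥ y = coroot G g y := by
    rw [single_dotProduct, one_mul]; rfl
  have hright : x ⬝ᵥ cartan G *ᵥ Pi.single g 1 = coroot G g x := by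
    rw [dotProduct_mulVec, ← hsymm.eq, vecMul_transpose, dotProduct_comm, hleft]
  simp only [reflection_apply, mulVec_sub, mulVec_smul, sub_dotProduct, dotProduct_sub,
    smul_dotProduct, dotProduct_smul, hleft, hright, coroot_single_self, smul_eq_mul]
  ring

abbrev coxeterSystem : CoxeterSystem (coxeterMatrix G) (coxeterMatrix G).Group :=
  (coxeterMatrix G).toCoxeterSystem

lemma isLiftable_reflection : (coxeterMatrix G).IsLiftable (reflection G) := by
  intro i j
  have hc := coroot_single G
  rw [coxeterMatrix_apply]
  split_ifs with hij hadj
  · subst hij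
    ext x : 1
    exact Module.involutive_reflection (coroot_single_self G i) x
  · exact Module.reflection_mul_reflection_pow_three_of_eq_neg_one _ _
      (by rw [hc, cartan_apply, if_neg hij, if_pos hadj])
      (by rw [hc, cartan_apply, if_neg (Ne.symm hij), if_pos hadj.symm])
  · exact Module.reflection_mul_reflection_sq_of_eq_zero _ _
      (by rw [hc, cartan_apply, if_neg hij, if_neg hadj])
      (by rw [hc, cartan_apply, if_neg (Ne.symm hij), if_neg (fun h => hadj h.symm)])

noncomputable def geometricRep : (coxeterMatrix G).Group →* (V → ℝ) ≃ₗ[ℝ] (V → ℝ) :=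
  (coxeterSystem G).lift ⟨reflection G, isLiftable_reflection G⟩

lemma geometricRep_simple (i : V) :
    geometricRep G ((coxeterSystem G).simple i) = reflection G i :=
  (coxeterSystem G).lift_apply_simple (isLiftable_reflection G) i

lemma geometricRep_mul_simple_apply (w : (coxeterMatrix G).Group) (i : V) (x : V → ℝ) :
    geometricRep G (w * (coxeterSystem G).simple i) x = geometricRep G w (reflection G i x) := by
  rw [map_mul, LinearEquiv.mul_apply, geometricRep_simple]

lemma geometricRep_wordProd_apply (l : List V) (x : V → ℝ) :
    geometricRep G ((coxeterSystem G).wordProd l) x = l.foldr (fun g z => reflV G g z) x := by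
  induction l with
  | nil => simp
  | cons g l ih =>
    rw [CoxeterSystem.wordProd_cons, map_mul, LinearEquiv.mul_apply, ih, geometricRep_simple,
      coe_reflection]
    rfl

lemma reflection_single (i j : V) :
    reflection G i (Pi.single j 1) = Pi.single j 1 - cartan G i j • Pi.single i 1 := by
  rw [reflection_apply, coroot_single]

lemma reflection_single_self (i : V) : reflection G i (Pi.single i 1) = -Pi.single i 1 :=
  Module.reflection_apply_self _

lemma reflection_reflection_single_of_adj {i j : V} (h : G.Adj i j) :
    reflection G i (reflection G j (Pi.single i 1)) = Pi.single j 1 := by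
  rw [reflection_single, map_sub, map_smul, reflection_single_self, reflection_single,
    cartan_apply, if_neg h.ne.symm, if_pos h.symm, cartan_apply, if_neg h.ne, if_pos h]
  module

theorem geometricRep_single_nonneg (w : (coxeterMatrix G).Group) (i : V)
    (hwi : (coxeterSystem G).length w < (coxeterSystem G).length (w * (coxeterSystem G).simple i)) :
    0 ≤ geometricRep G w (Pi.single i 1) := by
  set cs := coxeterSystem G
  induction hn : cs.length w using Nat.strong_induction_on generalizing w i with
  | _ n ih =>
  rcases eq_or_ne w 1 with rfl | hw
  · simp [Pi.single_nonneg]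
  obtain ⟨j, hj⟩ := cs.exists_rightDescent_of_ne_one hw
  rw [cs.isRightDescent_iff] at hj
  have hij : i ≠ j := by rintro rfl; omega
  obtain ⟨w₁, rfl⟩ : ∃ w₁, w = w₁ * cs.simple j := ⟨w * cs.simple j, by simp [mul_assoc]⟩
  rw [cs.simple_mul_simple_cancel_right] at hj
  rw [geometricRep_mul_simple_apply]
  rcases cs.length_mul_simple w₁ i with hup | hdown
  · have hc : cartan G j i ≤ 0 := by rw [cartan_apply, if_neg hij.symm]; split_ifs <;> norm_num
    rw [reflection_single, map_sub, map_smul]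
    exact sub_nonneg.2 ((smul_nonpos_of_nonpos_of_nonneg hc
      (ih _ (by omega) w₁ j (by rw [← hj]; omega) rfl)).trans (ih _ (by omega) w₁ i (by omega) rfl))
  obtain ⟨w₂, rfl⟩ : ∃ w₂, w₁ = w₂ * cs.simple i := ⟨w₁ * cs.simple i, by simp [mul_assoc]⟩
  rw [cs.simple_mul_simple_cancel_right] at hdown
  -- Now `w = w₂ s_i s_j`. Unless `i ~ j` and `ℓ(w₂ s_j) > ℓ(w₂)`, the relation between `s_i` and
  -- `s_j` rewrites `w s_i` as a word shorter than `w`.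
  by_cases hadj : G.Adj i j
  · rw [geometricRep_mul_simple_apply, reflection_reflection_single_of_adj G hadj]
    refine ih _ (by omega) w₂ j ?_ rfl
    rcases cs.length_mul_simple w₂ j with h | h
    · omega
    obtain ⟨w₃, rfl⟩ : ∃ w₃, w₂ = w₃ * cs.simple j := ⟨w₂ * cs.simple j, by simp [mul_assoc]⟩
    rw [cs.simple_mul_simple_cancel_right] at h
    rw [cs.mul_simple_mul_simple_mul_simple_mul_simple_of_eq_three (by
      rw [coxeterMatrix_apply, if_neg hij.symm, if_pos hadj.symm])] at hwi
    have := cs.length_mul_simple_le (w₃ * cs.simple i) j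
    have := cs.length_mul_simple_le w₃ i
    omega
  · rw [cs.mul_simple_mul_simple_mul_simple_of_eq_two (by
      rw [coxeterMatrix_apply, if_neg hij, if_neg hadj])] at hwi
    have := cs.length_mul_simple_le w₂ j
    omega

theorem geometricRep_single_nonneg_or_nonpos (w : (coxeterMatrix G).Group) (i : V) :
    0 ≤ geometricRep G w (Pi.single i 1) ∨ geometricRep G w (Pi.single i 1) ≤ 0 := by
  rcases (coxeterSystem G).length_mul_simple w i with hup | hdown
  · exact .inl (geometricRep_single_nonneg G w i (by omega))
  · have := geometricRep_single_nonneg G (w * (coxeterSystem G).simple i) i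
      (by rw [CoxeterSystem.simple_mul_simple_cancel_right]; omega)
    rw [geometricRep_mul_simple_apply, reflection_single_self, map_neg, neg_nonneg] at this
    exact .inr this

def IsRealRoot (x : V → ℝ) : Prop :=
  ∃ (l : List V) (a : V), x = l.foldr (fun g z => reflV G g z) (Pi.single a 1)

variable {G}

lemma isRealRoot_reflV {x : V → ℝ} (hx : IsRealRoot G x) (g : V) :
    IsRealRoot G (reflV G g x) := by
  obtain ⟨l, a, rfl⟩ := hx
  exact ⟨g :: l, a, rfl⟩

lemma IsRealRoot.nonneg_or_nonpos {x : V → ℝ} (hx : IsRealRoot G x) : 0 ≤ x ∨ x ≤ 0 := by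
  obtain ⟨l, a, rfl⟩ := hx
  rw [← geometricRep_wordProd_apply]
  exact geometricRep_single_nonneg_or_nonpos G _ a

lemma IsRealRoot.dotProduct_cartan_mulVec_self {x : V → ℝ} (hx : IsRealRoot G x) :
    x ⬝ᵥ cartan G *ᵥ x = 2 := by
  obtain ⟨l, a, rfl⟩ := hx
  induction l with
  | nil => simp [cartan_apply]
  | cons g l ih => rw [List.foldr_cons, ← coe_reflection, dotProduct_cartan_mulVec_reflection, ih]

theorem IsRealRoot.eq_single_of_reflV_apply_neg {x : V → ℝ} {v : V} (hx : IsRealRoot G x)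
    (h0 : 0 ≤ x) (hv : reflV G v x v < 0) : x = Pi.single v 1 := by
  have hnonpos : reflV G v x ≤ 0 :=
    (isRealRoot_reflV hx v).nonneg_or_nonpos.resolve_left fun h => (h v).not_gt hv
  have hsupp : x = x v • Pi.single v 1 := by
    ext u
    rcases eq_or_ne u v with rfl | hu
    · simp
    · simpa [hu] using le_antisymm (reflV_apply_of_ne G x hu ▸ hnonpos u) (h0 u)
  have hq := hx.dotProduct_cartan_mulVec_self
  rw [hsupp] at hq ⊢
  simp [mulVec_smul, cartan_apply] at hq
  have h0v : 0 ≤ x v := h0 v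
  have : x v = 1 := by nlinarith
  rw [this, one_smul]

section partCox

variable (G) {P : V → Prop} [DecidablePred P] (x : V → ℝ) {v : V}

lemma partCox_apply_of_pos (hv : P v) :
    partCox G P x v = -x v + ∑ h ∈ G.neighborFinset v, x h := if_pos hv

lemma partCox_apply_of_neg (hv : ¬ P v) : partCox G P x v = x v := if_neg hv

lemma partCox_apply_of_pos_eq_reflV (hv : P v) : partCox G P x v = reflV G v x v := by
  rw [partCox_apply_of_pos G x hv, reflV, if_pos rfl]

end partCox

lemma partCox_congr {P Q : V → Prop} [DecidablePred P] [DecidablePred Q] (h : ∀ v, P v ↔ Q v) :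
    partCox G P = partCox G Q := by
  ext x v
  simp [partCox, h]

lemma partCox_involutive {P : V → Prop} [DecidablePred P] (hP : G.IsIndepSet {v | P v}) :
    Involutive (partCox G P) := by
  intro x
  ext v
  by_cases hv : P v
  · have hfix : ∀ h ∈ G.neighborFinset v, partCox G P x h = x h := fun h hh =>
      have hadj := (G.mem_neighborFinset v h).1 hh
      partCox_apply_of_neg G x fun hh' => hP hv hh' (G.ne_of_adj hadj) hadj
    rw [partCox_apply_of_pos G _ hv, partCox_apply_of_pos G _ hv, Finset.sum_congr rfl hfix]
    ring
  · rw [partCox_apply_of_neg G _ hv, partCox_apply_of_neg G _ hv]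

lemma partCox_mem_insert {s : Finset V} {a : V} (ha : a ∉ s) (hnbr : ∀ h ∈ s, ¬ G.Adj a h)
    (x : V → ℝ) : partCox G (· ∈ insert a s) x = reflV G a (partCox G (· ∈ s) x) := by
  ext v
  rcases eq_or_ne v a with rfl | hv
  · have hfix : ∀ h ∈ G.neighborFinset v, partCox G (· ∈ s) x h = x h := fun h hh =>
      partCox_apply_of_neg G x fun hs => hnbr h hs ((G.mem_neighborFinset v h).1 hh)
    rw [partCox_apply_of_pos G _ (s.mem_insert_self v), reflV, if_pos rfl,
      Finset.sum_congr rfl hfix, partCox_apply_of_neg G _ ha]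
  · simp [partCox, reflV, hv]

lemma isRealRoot_partCox {P : V → Prop} [DecidablePred P] (hP : G.IsIndepSet {v | P v})
    {x : V → ℝ} (hx : IsRealRoot G x) : IsRealRoot G (partCox G P x) := by
  suffices ∀ s : Finset V, G.IsIndepSet ↑s → IsRealRoot G (partCox G (· ∈ s) x) by
    rw [partCox_congr (Q := (· ∈ Finset.univ.filter P)) (by simp)]
    exact this _ (hP.mono (by simp))
  intro s hs
  induction s using Finset.induction_on with
  | empty => rwa [show partCox G (· ∈ (∅ : Finset V)) x = x from funext fun v =>
      partCox_apply_of_neg G x (Finset.notMem_empty v)]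
  | insert a s ha ih =>
    rw [partCox_mem_insert ha fun h hh hadj => hs (by simp) (by simp [hh]) hadj.ne hadj]
    exact isRealRoot_reflV (ih (hs.mono (by simp))) a

theorem IsRealRoot.eq_single_of_partCox_apply_neg {P : V → Prop} [DecidablePred P]
    {x : V → ℝ} {v : V} (hx : IsRealRoot G x) (h0 : 0 ≤ x) (hv : partCox G P x v < 0) :
    x = Pi.single v 1 := by
  by_cases hPv : P v
  · exact hx.eq_single_of_reflV_apply_neg h0 (partCox_apply_of_pos_eq_reflV G x hPv ▸ hv)
  · exact absurd (partCox_apply_of_neg G x hPv ▸ hv) (h0 v).not_gt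

section coxeterTransformation

variable (G) (odd : V → Prop) [DecidablePred odd]

lemma coxPos_succ_apply (k : ℕ) (x : V → ℝ) : coxPos G odd (k + 1) x =
    (if Even k then partCox G odd else partCox G fun v => ¬ odd v) (coxPos G odd k x) := rfl

lemma coxPos_congr {Q : V → Prop} [DecidablePred Q] (h : ∀ v, odd v ↔ Q v) (k : ℕ) :
    coxPos G odd k = coxPos G Q k := by
  induction k with
  | zero => rfl
  | succ k ih => rw [coxPos, coxPos, ih, partCox_congr h, partCox_congr fun v => not_congr (h v)]

lemma coxNeg_eq_coxPos_not (k : ℕ) : coxNeg G odd k = coxPos G (fun v => ¬ odd v) k := by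
  induction k with
  | zero => rfl
  | succ k ih => rw [coxNeg, coxPos, ih, partCox_congr (Q := odd) fun v => not_not]

lemma coxZ_neg_natCast (m : ℕ) : coxZ G odd (-m) = coxNeg G odd m := by
  cases m <;> rfl

lemma coxZ_not (t : ℤ) : coxZ G (fun v => ¬ odd v) t = coxZ G odd (-t) := by
  rcases t with (_ | k) | k
  · rfl
  · exact (coxNeg_eq_coxPos_not G odd (k + 1)).symm
  · change coxNeg G _ (k + 1) = coxPos G odd (k + 1)
    rw [coxNeg_eq_coxPos_not, coxPos_congr G _ fun v => not_not]

lemma coxPos_succ_eq_comp (k : ℕ) :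
    coxPos G odd (k + 1) = coxPos G (fun v => ¬ odd v) k ∘ partCox G odd := by
  induction k generalizing odd with
  | zero => simp [coxPos]
  | succ k ih =>
    rw [coxPos, ih, coxPos, partCox_congr (P := fun v => ¬ ¬ odd v) (Q := odd) fun v => not_not]
    by_cases hk : Even k <;> simp [hk, Nat.even_add_one, comp_assoc]

variable {G odd}

lemma isRealRoot_coxPos (hbip : ∀ u v : V, G.Adj u v → (odd u ↔ ¬ odd v)) {x : V → ℝ}
    (hx : IsRealRoot G x) (k : ℕ) : IsRealRoot G (coxPos G odd k x) := by
  induction k with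
  | zero => exact hx
  | succ k ih =>
    rw [coxPos_succ_apply]
    split_ifs
    · exact isRealRoot_partCox (isIndepSet_of_bipartition hbip) ih
    · exact isRealRoot_partCox (isIndepSet_of_bipartition fun u v h => (hbip u v h).not) ih

theorem leftInverse_coxPos (hbip : ∀ u v : V, G.Adj u v → (odd u ↔ ¬ odd v)) (m : ℕ) :
    LeftInverse (coxZ G odd (if Even m then -(m : ℤ) else m)) (coxPos G odd m) := by
  induction m generalizing odd with
  | zero => exact fun x => rfl
  | succ m ih =>
    have hinv := (ih fun u v h => (hbip u v h).not).comp
      (partCox_involutive (isIndepSet_of_bipartition hbip)).leftInverse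
    rw [coxZ_not] at hinv
    rw [coxPos_succ_eq_comp]
    convert hinv using 1
    by_cases hm : Even m
    · simp only [hm, if_true, neg_neg, Nat.even_add_one, not_true, if_false]
      change coxPos G odd (m + 1) = partCox G odd ∘ coxPos G odd m
      rw [coxPos, if_pos hm]
    · simp only [hm, if_false, Nat.even_add_one, not_false_eq_true, if_true]
      rw [coxZ_neg_natCast, coxZ_neg_natCast, coxNeg, if_neg hm]

theorem exists_coxPos_eq_single (hbip : ∀ u v : V, G.Adj u v → (odd u ↔ ¬ odd v)) {d : V → ℝ}
    (hd : IsRealRoot G d) (h0 : 0 ≤ d) {k : ℕ} {v : V} (hk : coxPos G odd k d v < 0) :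
    ∃ m u, coxPos G odd m d = Pi.single u 1 := by
  induction k generalizing v with
  | zero => exact absurd hk (h0 v).not_gt
  | succ k ih =>
    by_cases hpos : 0 ≤ coxPos G odd k d
    · rw [coxPos_succ_apply] at hk
      split_ifs at hk <;>
        exact ⟨k, v, (isRealRoot_coxPos hbip hd k).eq_single_of_partCox_apply_neg hpos hk⟩
    · obtain ⟨u, hu⟩ : ∃ u, coxPos G odd k d u < 0 := by simpa [Pi.le_def] using hpos
      exact ih hu

theorem exists_eq_coxZ_single (hbip : ∀ u v : V, G.Adj u v → (odd u ↔ ¬ odd v)) {d : V → ℝ}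
    (hd : IsRealRoot G d) (h0 : 0 ≤ d) {k : ℕ} {v : V} (hk : coxPos G odd k d v < 0) :
    ∃ (t : ℤ) (g : V), d = coxZ G odd t (Pi.single g 1) := by
  obtain ⟨m, u, hm⟩ := exists_coxPos_eq_single hbip hd h0 hk
  exact ⟨_, u, by rw [← hm, leftInverse_coxPos hbip m d]⟩

end coxeterTransformation

end SimplyLaced

open SimplyLaced

theorem stmt_18_general (V : Type) [Fintype V] [DecidableEq V]
    (G : SimpleGraph V) [DecidableRel G.Adj]
    (odd : V → Prop) [DecidablePred odd]
    (hbip : ∀ u v : V, G.Adj u v → (odd u ↔ ¬ odd v))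
    (d : V → ℝ)
    (hroot : ∃ (l : List V) (a : V),
      d = l.foldr (fun g z => reflV G g z) (Pi.single a 1))
    (hnonneg : ∀ v, 0 ≤ d v)
    (hsing : ∃ (t : ℤ) (v : V), coxZ G odd t d v < 0) :
    ∃ (t : ℤ) (g : V), d = coxZ G odd t (Pi.single g 1) := by
  obtain ⟨t, v, hv⟩ := hsing
  rcases t.eq_nat_or_neg with ⟨k, rfl | rfl⟩
  · exact exists_eq_coxZ_single hbip hroot hnonneg hv
  · rw [← coxZ_not] at hv
    obtain ⟨t, g, hg⟩ := exists_eq_coxZ_single (fun u w h => (hbip u w h).not) hroot hnonneg hv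
    exact ⟨-t, g, by rw [hg, coxZ_not]⟩

/-- If d is a positive real root of a finite connected bipartite graph which is
singular (some c_t(d) has a negative coordinate), then d = c_t(ē_g) for some
t ∈ ℤ and some vertex g. -/
theorem stmt_18 (V : Type) [Fintype V] [DecidableEq V]
    (G : SimpleGraph V) [DecidableRel G.Adj] (hG : G.Connected)
    (odd : V → Prop) [DecidablePred odd]
    (hbip : ∀ u v : V, G.Adj u v → (odd u ↔ ¬ odd v))
    (d : V → ℝ)
    (hroot : ∃ (l : List V) (a : V),
      d = l.foldr (fun g z => reflV G g z) (Pi.single a 1))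
    (hpos : d ≠ 0) (hnonneg : ∀ v, 0 ≤ d v)
    (hsing : ∃ (t : ℤ) (v : V), coxZ G odd t d v < 0) :
    ∃ (t : ℤ) (g : V), d = coxZ G odd t (Pi.single g 1) :=
  stmt_18_general V G odd hbip d hroot hnonneg hsing
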